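/- If f₀ ∈ L^∞(𝕋²) satisfies f₀ = f₀ ∘ y_{2τ_k}^{(i_k;L_k)} almost everywhere for a sequence of shears with τ_k → 0 and i_k taking each value in {1,2} infinitely often, then f₀ is almost everywhere equal to a constant. -/

import Mathlib

open MeasureTheory Filter

noncomputable section

instance : Fact ((0:ℝ) < 1) := ⟨one_pos⟩

/-- The 1-dimensional torus `ℝ/ℤ`. -/
abbrev Torus : Type := AddCircle (1 : ℝ)

/-- The 2-dimensional torus `𝕋² = ℝ²/ℤ²`. -/
abbrev Torus2 : Type := Torus × Torus

/-- The representative of a point of the torus in `[0,1)`. -/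
noncomputable def rep (x : Torus) : ℝ := (AddCircle.equivIco 1 0 x : ℝ)

/-- The sign (`+1` on even strips of width `1/(2L)`, `-1` on odd ones). -/
noncomputable def shearSign (L : ℕ) (c : Torus) : ℝ :=
  if Even ⌊(2 * L : ℝ) * rep c⌋ then 1 else -1

/-- The Lagrangian shear flow `y_t^{(i;L)} : 𝕋² → 𝕋²`, translating the coordinate `i`
by `± t` according to the parity of the strip of width `1/(2L)` containing the
other coordinate. -/
noncomputable def shearFlow (i : Fin 2) (L : ℕ) (t : ℝ) (x : Torus2) : Torus2 :=
  if i = 0 then (x.1 + ((shearSign L x.2 * t : ℝ) : Torus), x.2)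
  else (x.1, x.2 + ((shearSign L x.1 * t : ℝ) : Torus))

/-!
The a.e. periods of `f₀` form a subgroup of `𝕋²`. The shear `y_{2τ}^{(i;L)}` moves every
strip by `±2τ eᵢ` and maps each strip to itself, so `2τ_k e_{i_k}` is an a.e. period of `f₀`.
As `τ_k → 0` along both directions, the periods meet each coordinate circle in a dense
subgroup, hence are dense in `𝕋²`. Finally, the translation action of `𝕋²` on itself is
ergodic and the set of a.e. periods of a level set of `f₀` is closed, so dense periods force
every level set to be null or conull, i.e. `f₀` is a.e. constant.
-/

open Set Topology

section Periods

variable {G X : Type*} [AddGroup G] [MeasurableSpace G] [MeasurableAdd G]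

def aePeriods (μ : Measure G) [μ.IsAddLeftInvariant] (f : G → X) : AddSubgroup G where
  carrier := {v | ∀ᵐ x ∂μ, f (v + x) = f x}
  zero_mem' := by simp
  add_mem' {v w} hv hw := by
    show ∀ᵐ x ∂μ, f (v + w + x) = f x
    have hv' := (measurePreserving_add_left μ w).quasiMeasurePreserving.ae hv
    filter_upwards [hv', hw] with x hvx hwx
    rw [add_assoc, hvx, hwx]
  neg_mem' {v} hv := by
    have hv' := (measurePreserving_add_left μ (-v)).quasiMeasurePreserving.ae hv
    filter_upwards [hv'] with x hx
    simpa using hx.symm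

variable {μ : Measure G} [μ.IsAddLeftInvariant] {f : G → X}

lemma mem_aePeriods {v : G} : v ∈ aePeriods μ f ↔ ∀ᵐ x ∂μ, f (v + x) = f x := Iff.rfl

lemma mem_aePeriods_of_eq_or_eq {T : G → G} {v : G} (hT : ∀ x, T x = v + x ∨ T (v + x) = x)
    (hf : ∀ᵐ x ∂μ, f (T x) = f x) : v ∈ aePeriods μ f := by
  have hf' := (measurePreserving_add_left μ v).quasiMeasurePreserving.ae hf
  filter_upwards [hf, hf'] with x hx hx'
  rcases hT x with h | h
  · rw [← h, hx]
  · rw [← hx', h]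

end Periods

theorem exists_ae_eq_const_of_dense_aePeriods {G X : Type*} [AddGroup G] [TopologicalSpace G]
    [IsTopologicalAddGroup G] [MeasurableSpace G] [BorelSpace G] [MeasurableAdd₂ G]
    [MeasurableNeg G]
    {μ : Measure G} [IsFiniteMeasure μ] [μ.InnerRegular] [μ.IsAddLeftInvariant]
    [MeasurableSpace X] [MeasurableSpace.CountablySeparated X] [Nonempty X] {f : G → X}
    (hf : Measurable f) (hd : Dense (aePeriods μ f : Set G)) : ∃ c, f =ᵐ[μ] fun _ => c := by
  refine exists_eventuallyEq_const_of_forall_separating MeasurableSet fun U hU => ?_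
  refine eventuallyConst_set.mp (aeconst_of_dense_setOfPred_preimage_vadd_ae
    (hf hU).nullMeasurableSet (hd.mono fun v hv => ?_))
  exact ((mem_aePeriods.1 hv).mono fun x hx => iff_of_eq (congrArg (· ∈ U) hx)).set_eq

instance : (volume : Measure Torus2).IsAddLeftInvariant := by
  rw [Measure.volume_eq_prod]; infer_instance

def axisVec (j : Fin 2) : ℝ →+ Torus2 :=
  if j = 0 then (AddMonoidHom.inl Torus Torus).comp (QuotientAddGroup.mk' _)
  else (AddMonoidHom.inr Torus Torus).comp (QuotientAddGroup.mk' _)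

@[simp] lemma axisVec_zero_apply (t : ℝ) : axisVec 0 t = ((t : Torus), 0) := rfl

@[simp] lemma axisVec_one_apply (t : ℝ) : axisVec 1 t = (0, (t : Torus)) := rfl

lemma dense_of_forall_axisVec_mem {H : AddSubgroup Torus2}
    (h : ∀ j, ∀ ε > 0, ∃ t ∈ Ioo (0 : ℝ) ε, axisVec j t ∈ H) : Dense (H : Set Torus2) := by
  have hline : ∀ j, Dense ((H.comap (axisVec j) : AddSubgroup ℝ) : Set ℝ) :=
    fun j => AddSubgroup.dense_of_not_isolated_zero _ fun ε hε =>
      let ⟨t, ht, htH⟩ := h j ε hε; ⟨t, htH, ht⟩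
  let p : ℝ × ℝ → Torus2 := Prod.map (↑) (↑)
  have hp : Continuous p := (AddCircle.continuous_mk' 1).prodMap (AddCircle.continuous_mk' 1)
  have hsurj : Function.Surjective p :=
    QuotientAddGroup.mk_surjective.prodMap QuotientAddGroup.mk_surjective
  refine (hsurj.denseRange.dense_image hp ((hline 0).prod (hline 1))).mono ?_
  rintro _ ⟨⟨a, b⟩, ⟨ha, hb⟩, rfl⟩
  simpa [p] using H.add_mem ha hb

lemma shearSign_eq_one_or_eq_neg_one (L : ℕ) (c : Torus) :
    shearSign L c = 1 ∨ shearSign L c = -1 := by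
  unfold shearSign; split_ifs <;> simp

lemma shearFlow_eq_or (i : Fin 2) (L : ℕ) (t : ℝ) (x : Torus2) :
    shearFlow i L t x = axisVec i t + x ∨ shearFlow i L t (axisVec i t + x) = x := by
  fin_cases i
  · rcases shearSign_eq_one_or_eq_neg_one L x.2 with hs | hs
    · left; simp [shearFlow, hs, Prod.ext_iff, add_comm]
    · right; simp [shearFlow, hs]
  · rcases shearSign_eq_one_or_eq_neg_one L x.1 with hs | hs
    · left; simp [shearFlow, hs, Prod.ext_iff, add_comm]
    · right; simp [shearFlow, hs]

theorem invariant_under_shears_ae_const_general (f₀ : Torus2 → ℝ)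
    (hmeas : Measurable f₀)
    (i : ℕ → Fin 2) (L : ℕ → ℕ) (τ : ℕ → ℝ)
    (hτpos : ∀ k, 0 < τ k) (hτ : Tendsto τ atTop (nhds 0))
    (hi0 : ∀ N : ℕ, ∃ k ≥ N, i k = 0) (hi1 : ∀ N : ℕ, ∃ k ≥ N, i k = 1)
    (hinv : ∀ k, f₀ =ᵐ[volume] fun x => f₀ (shearFlow (i k) (L k) (2 * τ k) x)) :
    ∃ c : ℝ, f₀ =ᵐ[volume] fun _ => c := by
  have hshear : ∀ k, axisVec (i k) (2 * τ k) ∈ aePeriods volume f₀ := fun k =>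
    mem_aePeriods_of_eq_or_eq (shearFlow_eq_or _ _ _) (hinv k).symm
  have hsmall : ∀ j, (∀ N, ∃ k ≥ N, i k = j) →
      ∀ ε > 0, ∃ t ∈ Ioo (0 : ℝ) ε, axisVec j t ∈ aePeriods volume f₀ := by
    intro j hj ε hε
    have h2τ : Tendsto (fun k => 2 * τ k) atTop (𝓝 0) := by simpa using hτ.const_mul 2
    obtain ⟨k, hkj, hkε⟩ :=
      ((frequently_atTop.2 hj).and_eventually (h2τ.eventually (gt_mem_nhds hε))).exists
    exact ⟨2 * τ k, ⟨by linarith [hτpos k], hkε⟩, hkj ▸ hshear k⟩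
  refine exists_ae_eq_const_of_dense_aePeriods hmeas (dense_of_forall_axisVec_mem fun j => ?_)
  fin_cases j
  exacts [hsmall 0 hi0, hsmall 1 hi1]

/-- If `f₀ ∈ L^∞(𝕋²)` satisfies `f₀ = f₀ ∘ y_{2τ_k}^{(i_k;L_k)}`
almost everywhere for a sequence of shears with `τ_k → 0`, `τ_k > 0`, and `i_k`
taking each value in `{1,2}` infinitely often, then `f₀` is a.e. constant. -/
theorem invariant_under_shears_ae_const (f₀ : Torus2 → ℝ)
    (hmeas : Measurable f₀) (hbd : ∃ C : ℝ, ∀ x, |f₀ x| ≤ C)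
    (i : ℕ → Fin 2) (L : ℕ → ℕ) (τ : ℕ → ℝ)
    (hτpos : ∀ k, 0 < τ k) (hτ : Tendsto τ atTop (nhds 0))
    (hi0 : ∀ N : ℕ, ∃ k ≥ N, i k = 0) (hi1 : ∀ N : ℕ, ∃ k ≥ N, i k = 1)
    (hinv : ∀ k, f₀ =ᵐ[volume] fun x => f₀ (shearFlow (i k) (L k) (2 * τ k) x)) :
    ∃ c : ℝ, f₀ =ᵐ[volume] fun _ => c :=
  invariant_under_shears_ae_const_general f₀ hmeas i L τ hτpos hτ hi0 hi1 hinv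

end
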